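/- Let nA, nB ≥ 1 and let ρ be a density matrix indexed by (Fin nA × Fin nB) such that Tr((Tr_A ρ)²) = 1, i.e., the reduced state on the second factor is pure. Then ρ = (Tr_B ρ) ⊗ (Tr_A ρ). -/

import Mathlib

open ComplexOrder Kronecker

/-- A density matrix: Hermitian, positive semidefinite, trace one. -/
def IsDensityMatrix {n : Type*} [Fintype n] [DecidableEq n] (ρ : Matrix n n ℂ) : Prop :=
  ρ.IsHermitian ∧ ρ.PosSemidef ∧ ρ.trace = 1

/-- Partial trace over the first factor. -/
noncomputable def ptraceA {nA nB : ℕ} (M : Matrix (Fin nA × Fin nB) (Fin nA × Fin nB) ℂ) :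
    Matrix (Fin nB) (Fin nB) ℂ :=
  Matrix.of fun j j' => ∑ i, M (i, j) (i, j')

/-- Partial trace over the second factor. -/
noncomputable def ptraceB {nA nB : ℕ} (M : Matrix (Fin nA × Fin nB) (Fin nA × Fin nB) ℂ) :
    Matrix (Fin nA) (Fin nA) ℂ :=
  Matrix.of fun i i' => ∑ j, M (i, j) (i', j)

/-!
The reduced state `σ = Tr_A ρ` is positive semidefinite with `Tr σ = Tr σ² = 1`, so its
eigenvalues are `1, 0, …, 0` and `σ = v v*` is a rank-one projection. For `E = 1 ⊗ σ` one has
`Tr (ρ (1 - E)) = Tr σ - Tr σ² = 0`; as `1 - E` is a Hermitian projection and `ρ ≥ 0`, this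
forces `ρ (1 - E) = 0`, hence `ρ = E ρ E = T ⊗ σ`. A product matrix of trace one is the
Kronecker product of its two partial traces.
-/

open Matrix
open scoped MatrixOrder

theorem exists_eq_pi_single_of_sum_eq_one_of_sum_sq_eq_one {ι : Type*} [Fintype ι]
    [DecidableEq ι] {t : ι → ℝ} (h0 : 0 ≤ t) (h1 : ∑ i, t i = 1) (h2 : ∑ i, t i ^ 2 = 1) :
    ∃ k, t = Pi.single k 1 := by
  have hle : ∀ i, t i ≤ 1 := fun i =>
    h1 ▸ Finset.single_le_sum (fun j _ => h0 j) (Finset.mem_univ i)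
  have hzero_or_one : ∀ i, t i = 0 ∨ t i = 1 := by
    have hsum : ∑ i, t i * (1 - t i) = 0 := by
      simp only [mul_sub, mul_one, Finset.sum_sub_distrib, ← sq, h1, h2, sub_self]
    intro i
    have := (Finset.sum_eq_zero_iff_of_nonneg fun j _ =>
      mul_nonneg (h0 j) (sub_nonneg.2 (hle j))).1 hsum i (Finset.mem_univ i)
    rcases mul_eq_zero.1 this with h | h
    · exact Or.inl h
    · exact Or.inr (sub_eq_zero.1 h).symm
  obtain ⟨k, -, hk⟩ := Finset.exists_ne_zero_of_sum_ne_zero (h1 ▸ one_ne_zero : ∑ i, t i ≠ 0)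
  have htk : t k = 1 := (hzero_or_one k).resolve_left hk
  have hrest : ∑ i ∈ Finset.univ.erase k, t i = 0 := by
    linarith [Finset.add_sum_erase Finset.univ t (Finset.mem_univ k)]
  refine ⟨k, funext fun i => ?_⟩
  rcases eq_or_ne i k with rfl | hik
  · simp [htk]
  · rw [Pi.single_eq_of_ne hik]
    exact (Finset.sum_eq_zero_iff_of_nonneg fun j _ => h0 j).1 hrest i (by simp [hik])

theorem Matrix.PosSemidef.exists_eq_vecMulVec_star_of_trace_mul_self_eq_one {n : Type*}
    [Fintype n] [DecidableEq n] {σ : Matrix n n ℂ} (hσ : σ.PosSemidef) (h1 : σ.trace = 1)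
    (h2 : (σ * σ).trace = 1) : ∃ v : n → ℂ, σ = vecMulVec v (star v) := by
  have hsum : ∑ i, hσ.1.eigenvalues i = 1 := by
    have := hσ.1.trace_eq_sum_eigenvalues.symm.trans h1
    exact_mod_cast (show ((∑ i, _ : ℝ) : ℂ) = 1 by simpa using this)
  have hsum_sq : ∑ i, hσ.1.eigenvalues i ^ 2 = 1 := by
    have : (σ * σ).trace = ∑ i, ((hσ.1.eigenvalues i ^ 2 : ℝ) : ℂ) := by
      conv_lhs => rw [hσ.1.spectral_theorem, ← map_mul, Unitary.conjStarAlgAut_apply,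
        trace_mul_cycle, Unitary.coe_star_mul_self, one_mul, diagonal_mul_diagonal,
        trace_diagonal]
      simp [sq]
    have := this.symm.trans h2
    exact_mod_cast (show ((∑ i, _ : ℝ) : ℂ) = 1 by simpa using this)
  obtain ⟨k, hk⟩ := exists_eq_pi_single_of_sum_eq_one_of_sum_sq_eq_one
    hσ.eigenvalues_nonneg hsum hsum_sq
  have hD : diagonal (RCLike.ofReal ∘ hσ.1.eigenvalues) =
      vecMulVec (Pi.single k 1) (Pi.single k (1 : ℂ)) := by
    rw [hk]
    ext i j
    simp only [diagonal_apply, vecMulVec_apply, Function.comp_apply, Pi.single_apply]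
    split_ifs <;> simp_all
  refine ⟨hσ.1.eigenvectorBasis k, ?_⟩
  conv_lhs => rw [hσ.1.spectral_theorem, Unitary.conjStarAlgAut_apply, hD, mul_vecMulVec,
    vecMulVec_mul]
  rw [single_one_vecMul]
  congr 1
  ext i
  simp

theorem isIdempotentElem_vecMulVec {n : Type*} [Fintype n] {v w : n → ℂ} (h : w ⬝ᵥ v = 1) :
    IsIdempotentElem (vecMulVec v w) := by
  rw [IsIdempotentElem, vecMulVec_mul_vecMulVec, h, one_smul]

theorem Matrix.PosSemidef.mul_eq_zero_of_conjTranspose_mul_mul_eq_zero {n m 𝕜 : Type*}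
    [RCLike 𝕜] [Fintype n] [Fintype m] {A : Matrix n n 𝕜} (hA : A.PosSemidef)
    {B : Matrix n m 𝕜} (h : Bᴴ * A * B = 0) : A * B = 0 := by
  classical
  obtain ⟨C, rfl⟩ := CStarAlgebra.nonneg_iff_eq_star_mul_self.mp hA.nonneg
  rw [star_eq_conjTranspose, conjTranspose_mul_self_mul_eq_zero,
    ← conjTranspose_mul_self_eq_zero, conjTranspose_mul]
  simpa only [star_eq_conjTranspose, Matrix.mul_assoc] using h

theorem Matrix.PosSemidef.mul_eq_zero_of_trace_mul_eq_zero {n 𝕜 : Type*} [RCLike 𝕜]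
    [Fintype n] {A P : Matrix n n 𝕜} (hA : A.PosSemidef) (hP : P.IsHermitian)
    (hPP : IsIdempotentElem P) (h : (A * P).trace = 0) : A * P = 0 := by
  refine hA.mul_eq_zero_of_conjTranspose_mul_mul_eq_zero ?_
  rw [← (hA.conjTranspose_mul_mul_same P).trace_eq_zero_iff, trace_mul_comm, ← Matrix.mul_assoc,
    hP.eq, hPP.eq, trace_mul_comm, h]

theorem ptraceA_eq_sum_submatrix {nA nB : ℕ} (M : Matrix (Fin nA × Fin nB) (Fin nA × Fin nB) ℂ) :
    ptraceA M = ∑ i, M.submatrix (Prod.mk i) (Prod.mk i) := by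
  ext j j'
  simp [ptraceA, Matrix.sum_apply]

theorem Matrix.PosSemidef.ptraceA {nA nB : ℕ} {M : Matrix (Fin nA × Fin nB) (Fin nA × Fin nB) ℂ}
    (hM : M.PosSemidef) : (ptraceA M).PosSemidef := by
  rw [ptraceA_eq_sum_submatrix]
  exact posSemidef_sum _ fun i _ => hM.submatrix _

theorem trace_ptraceA {nA nB : ℕ} (M : Matrix (Fin nA × Fin nB) (Fin nA × Fin nB) ℂ) :
    (ptraceA M).trace = M.trace := by
  simp only [trace, ptraceA, diag_apply, of_apply, Fintype.sum_prod_type]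
  exact Finset.sum_comm

theorem trace_mul_one_kronecker {nA nB : ℕ} (M : Matrix (Fin nA × Fin nB) (Fin nA × Fin nB) ℂ)
    (B : Matrix (Fin nB) (Fin nB) ℂ) : (M * (1 ⊗ₖ B)).trace = (ptraceA M * B).trace := by
  simp only [trace, diag_apply, mul_apply, kroneckerMap_apply, one_apply, ite_mul, one_mul,
    zero_mul, mul_ite, mul_zero, Fintype.sum_prod_type, Finset.sum_ite_irrel,
    Finset.sum_const_zero, Finset.sum_ite_eq', Finset.mem_univ, ↓reduceIte, ptraceA, of_apply,
    Finset.sum_mul]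
  rw [Finset.sum_comm]
  exact Finset.sum_congr rfl fun _ _ => Finset.sum_comm

theorem ptraceA_kronecker {nA nB : ℕ} (A : Matrix (Fin nA) (Fin nA) ℂ)
    (B : Matrix (Fin nB) (Fin nB) ℂ) : ptraceA (A ⊗ₖ B) = A.trace • B := by
  ext j j'
  simp [ptraceA, trace, Finset.sum_mul]

theorem ptraceB_kronecker {nA nB : ℕ} (A : Matrix (Fin nA) (Fin nA) ℂ)
    (B : Matrix (Fin nB) (Fin nB) ℂ) : ptraceB (A ⊗ₖ B) = B.trace • A := by
  ext i i'
  simp [ptraceB, trace, Finset.mul_sum, mul_comm]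

theorem eq_ptraceB_kronecker_ptraceA_of_eq_kronecker {nA nB : ℕ}
    {M : Matrix (Fin nA × Fin nB) (Fin nA × Fin nB) ℂ} (hM : M.trace = 1)
    {A : Matrix (Fin nA) (Fin nA) ℂ} {B : Matrix (Fin nB) (Fin nB) ℂ} (h : M = A ⊗ₖ B) :
    M = ptraceB M ⊗ₖ ptraceA M := by
  subst h
  rw [ptraceB_kronecker, ptraceA_kronecker, smul_kronecker, kronecker_smul, smul_smul, mul_comm,
    ← trace_kronecker, hM, one_smul]

theorem one_kronecker_vecMulVec_mul_mul {l n : Type*} [Fintype l] [DecidableEq l] [Fintype n]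
    (M : Matrix (l × n) (l × n) ℂ) (v w : n → ℂ) :
    (1 ⊗ₖ vecMulVec v w) * M * (1 ⊗ₖ vecMulVec v w) =
      (of fun i i' => ∑ a, ∑ b, w a * M (i, a) (i', b) * v b) ⊗ₖ vecMulVec v w := by
  ext ⟨i, j⟩ ⟨i', j'⟩
  simp only [mul_apply, kroneckerMap_apply, one_apply, vecMulVec_apply, ite_mul, one_mul,
    zero_mul, Fintype.sum_prod_type, Finset.sum_ite_irrel, Finset.sum_const_zero, Finset.sum_ite_eq,
    Finset.mem_univ, ↓reduceIte, mul_ite, Finset.sum_mul, mul_zero, Finset.sum_ite_eq', of_apply]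
  rw [Finset.sum_comm]
  exact Finset.sum_congr rfl fun _ _ => Finset.sum_congr rfl fun _ _ => by ring

theorem factorization_of_reduced_pure_general {nA nB : ℕ}
    (ρ : Matrix (Fin nA × Fin nB) (Fin nA × Fin nB) ℂ)
    (hρ : IsDensityMatrix ρ)
    (hpure : (ptraceA ρ * ptraceA ρ).trace = 1) :
    ρ = ptraceB ρ ⊗ₖ ptraceA ρ := by
  obtain ⟨hH, hP, htr⟩ := hρ
  set σ := ptraceA ρ
  have hσ : σ.PosSemidef := hP.ptraceA
  have hσtr : σ.trace = 1 := (trace_ptraceA ρ).trans htr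
  obtain ⟨v, hv⟩ := hσ.exists_eq_vecMulVec_star_of_trace_mul_self_eq_one hσtr hpure
  set E := (1 : Matrix (Fin nA) (Fin nA) ℂ) ⊗ₖ σ with hE
  have hherm : E.IsHermitian := (PosSemidef.one.kronecker hσ).isHermitian
  have hidem : IsIdempotentElem E := by
    have hσσ : IsIdempotentElem σ :=
      hv ▸ isIdempotentElem_vecMulVec (by rw [dotProduct_comm, ← trace_vecMulVec, ← hv, hσtr])
    rw [IsIdempotentElem, hE, ← mul_kronecker_mul, one_mul, hσσ.eq]
  have hkill : ρ * (1 - E) = 0 :=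
    hP.mul_eq_zero_of_trace_mul_eq_zero (isHermitian_one.sub hherm) hidem.one_sub
      (by rw [mul_sub, mul_one, trace_sub, hE, trace_mul_one_kronecker, htr, hpure, sub_self])
  have hright : ρ * E = ρ := by
    rw [mul_sub, mul_one, sub_eq_zero] at hkill
    exact hkill.symm
  have hleft : E * ρ = ρ := by
    simpa only [conjTranspose_mul, hH.eq, hherm.eq] using congrArg conjTranspose hright
  have hfactor : E * ρ * E = ρ := by rw [hleft, hright]
  rw [hE, hv, one_kronecker_vecMulVec_mul_mul] at hfactor
  exact eq_ptraceB_kronecker_ptraceA_of_eq_kronecker htr hfactor.symm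

/-- If the reduced state of a bipartite density matrix on the second factor is pure,
then the state factorizes as the Kronecker product of its reduced states. -/
theorem factorization_of_reduced_pure {nA nB : ℕ} (hA : 1 ≤ nA) (hB : 1 ≤ nB)
    (ρ : Matrix (Fin nA × Fin nB) (Fin nA × Fin nB) ℂ)
    (hρ : IsDensityMatrix ρ)
    (hpure : (ptraceA ρ * ptraceA ρ).trace = 1) :
    ρ = ptraceB ρ ⊗ₖ ptraceA ρ :=
  factorization_of_reduced_pure_general ρ hρ hpure
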